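/- An E-linear code C of length 2n is right symplectic nice, i.e. |C|·|C^{⊥_{S_R}}| = |E|^{2n} = 4^{2n}, if and only if C_Res = {0}; and in that case C^{⊥_{S_R}} = C^{⊥_S}. Consequently, a nonzero E-linear code cannot be both left and right symplectic nice. -/

import Mathlib

open Finset

/-- The non-unital ring `E`, realized as pairs `(u, v) ∈ F₂ × F₂`
representing `uκ + vζ`. -/
def Ering : Type := (ZMod 2) × (ZMod 2)

namespace Ering

instance : AddCommGroup Ering := inferInstanceAs (AddCommGroup ((ZMod 2) × (ZMod 2)))
instance : DecidableEq Ering := inferInstanceAs (DecidableEq ((ZMod 2) × (ZMod 2)))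
instance : Fintype Ering := inferInstanceAs (Fintype ((ZMod 2) × (ZMod 2)))

instance : Mul Ering := ⟨fun a b => (a.1 * b.1, a.2 * b.1)⟩

instance : NonUnitalRing Ering :=
  { (inferInstance : AddCommGroup Ering), (inferInstance : Mul Ering) with
    left_distrib := by decide
    right_distrib := by decide
    zero_mul := by decide
    mul_zero := by decide
    mul_assoc := by decide }

/-- The generator κ. -/
def kappa : Ering := ((1 : ZMod 2), (0 : ZMod 2))
/-- The generator τ. -/
def tau : Ering := ((1 : ZMod 2), (1 : ZMod 2))
/-- ζ = κ + τ. -/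
def zeta : Ering := ((0 : ZMod 2), (1 : ZMod 2))

/-- The scalar action of `F₂` on `E`: `u • e = e` if `u = 1`, else `0`. -/
def fsmul (u : ZMod 2) (e : Ering) : Ering := if u = 1 then e else 0

/-- `E`-vectors of length `2n`, written as a pair `(u | v)` of halves of length `n`. -/
abbrev VE (n : ℕ) := (Fin n → Ering) × (Fin n → Ering)

/-- `F₂`-vectors of length `2n`, written as a pair of halves of length `n`. -/
abbrev VF (n : ℕ) := (Fin n → ZMod 2) × (Fin n → ZMod 2)

/-- Symplectic inner product on `E^{2n}`: `⟨(u|v),(u'|v')⟩ₛ = ⟨u,v'⟩ + ⟨v,u'⟩`. -/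
def sympE {n : ℕ} (x y : VE n) : Ering := ∑ i, x.1 i * y.2 i + ∑ i, x.2 i * y.1 i

/-- Symplectic inner product on `F₂^{2n}`. -/
def sympF {n : ℕ} (x y : VF n) : ZMod 2 := ∑ i, x.1 i * y.2 i + ∑ i, x.2 i * y.1 i

/-- An `E`-linear code: a left `E`-submodule of `E^{2n}`. -/
def IsLinearCode {n : ℕ} (C : Set (VE n)) : Prop :=
  (0 : VE n) ∈ C ∧ (∀ x ∈ C, ∀ y ∈ C, x + y ∈ C) ∧
    (∀ e : Ering, ∀ x ∈ C, ((fun i => e * x.1 i, fun i => e * x.2 i) : VE n) ∈ C)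

/-- Componentwise reduction `π : E^{2n} → F₂^{2n}`, `π(uκ + vζ) = u`. -/
def resVec {n : ℕ} (x : VE n) : VF n := (fun i => (x.1 i).1, fun i => (x.2 i).1)

/-- For `e ∈ E` and `v ∈ F₂^{2n}`, the vector `ev ∈ E^{2n}` with entries `vᵢ • e`. -/
def evec {n : ℕ} (e : Ering) (v : VF n) : VE n :=
  (fun i => fsmul (v.1 i) e, fun i => fsmul (v.2 i) e)

/-- The residue code `C_Res = π(C)`. -/
def resCode {n : ℕ} (C : Set (VE n)) : Set (VF n) := resVec '' C

/-- The torsion code `C_Tor = {v : ζv ∈ C}`. -/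
def torCode {n : ℕ} (C : Set (VE n)) : Set (VF n) := {v | evec zeta v ∈ C}

/-- The left symplectic dual. -/
def leftDual {n : ℕ} (C : Set (VE n)) : Set (VE n) := {z | ∀ w ∈ C, sympE z w = 0}

/-- The right symplectic dual. -/
def rightDual {n : ℕ} (C : Set (VE n)) : Set (VE n) := {z | ∀ w ∈ C, sympE w z = 0}

/-- The two-sided symplectic dual. -/
def dual {n : ℕ} (C : Set (VE n)) : Set (VE n) := leftDual C ∩ rightDual C

/-- The binary symplectic dual of `D ⊆ F₂^{2n}`. -/
def dualF {n : ℕ} (D : Set (VF n)) : Set (VF n) := {z | ∀ w ∈ D, sympF z w = 0}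

/-- The two-sided symplectic hull. -/
def SHull {n : ℕ} (C : Set (VE n)) : Set (VE n) := C ∩ dual C

/-- The left symplectic hull. -/
def LSHull {n : ℕ} (C : Set (VE n)) : Set (VE n) := C ∩ leftDual C

/-- The right symplectic hull. -/
def RSHull {n : ℕ} (C : Set (VE n)) : Set (VE n) := C ∩ rightDual C

/-- Symplectic hull of a binary code. -/
def SHullF {n : ℕ} (D : Set (VF n)) : Set (VF n) := D ∩ dualF D

/-- A free `E`-linear code: residue and torsion codes coincide. -/
def IsFree {n : ℕ} (C : Set (VE n)) : Prop := resCode C = torCode C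

end Ering

open Ering

/-! Because `a * b` only sees the residue of `b`, `⟨w, z⟩ₛ` depends on `z` only through
`π(z)`, and its two coordinates are the binary forms of `π(w)` and of the `ζ`-part of `w`
against `π(z)`. Both of these lie in `C_Tor` (they are read off from `ζw` and `w + κw`), and
every element of `C_Tor` is the `ζ`-part of some codeword, so `C^{⊥_{S_R}} = π⁻¹(C_Tor^{⊥_S})`.
Counting with `|C| = |C_Res|·|C_Tor|` and binary duality gives
`|C|·|C^{⊥_{S_R}}| = |C_Res|·4^{2n}`. When `C_Res = {0}` the same observation makes every
vector left-orthogonal to `C`, so left niceness forces `|C| = 1`. -/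

lemma Set.natCard_eq_one_iff_eq_singleton_of_mem {α : Type*} {S : Set α} {a : α} (ha : a ∈ S) :
    Nat.card S = 1 ↔ S = {a} := by
  rw [Nat.card_coe_set_eq, Set.ncard_eq_one]
  refine ⟨?_, fun h => ⟨a, h⟩⟩
  rintro ⟨b, rfl⟩
  rw [Set.mem_singleton_iff.1 ha]

open Module in
theorem LinearMap.BilinForm.card_mul_card_orthogonal {K V : Type*} [Field K] [Finite K]
    [AddCommGroup V] [Module K V] [FiniteDimensional K V] {B : LinearMap.BilinForm K V}
    (hB : B.Nondegenerate) (W : Submodule K V) :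
    Nat.card W * Nat.card (B.orthogonal W) = Nat.card V := by
  rw [natCard_eq_pow_finrank (K := K), natCard_eq_pow_finrank (K := K) (V := B.orthogonal W),
    natCard_eq_pow_finrank (K := K) (V := V), ← pow_add, finrank_orthogonal hB,
    Nat.add_sub_cancel' W.finrank_le]

namespace Ering

lemma sympF_eq_dotProduct {n : ℕ} (x y : VF n) : sympF x y = x.1 ⬝ᵥ y.2 + x.2 ⬝ᵥ y.1 := rfl

lemma sympF_comm {n : ℕ} (x y : VF n) : sympF x y = sympF y x := by
  simp only [sympF_eq_dotProduct, dotProduct_comm x.1, dotProduct_comm x.2, add_comm]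

lemma sympF_zero_right {n : ℕ} (x : VF n) : sympF x 0 = 0 := by
  simp [sympF_eq_dotProduct]

def sympForm (n : ℕ) : LinearMap.BilinForm (ZMod 2) (VF n) :=
  LinearMap.mk₂ (ZMod 2) sympF
    (fun _ _ _ => by
      simp only [sympF_eq_dotProduct, Prod.fst_add, Prod.snd_add, add_dotProduct]; ring)
    (fun _ _ _ => by
      simp only [sympF_eq_dotProduct, Prod.smul_fst, Prod.smul_snd, smul_dotProduct, smul_add])
    (fun _ _ _ => by
      simp only [sympF_eq_dotProduct, Prod.fst_add, Prod.snd_add, dotProduct_add]; ring)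
    (fun _ _ _ => by
      simp only [sympF_eq_dotProduct, Prod.smul_fst, Prod.smul_snd, dotProduct_smul, smul_add])

lemma sympForm_apply {n : ℕ} (x y : VF n) : sympForm n x y = sympF x y := rfl

lemma sympForm_nondegenerate (n : ℕ) : (sympForm n).Nondegenerate := by
  refine (LinearMap.IsRefl.nondegenerate_iff_separatingLeft
    fun x y h => by rwa [sympForm_apply, sympF_comm] at h).2 fun x hx => ?_
  have hfst : ∀ w, x.1 ⬝ᵥ w = 0 := fun w => by
    simpa [sympForm_apply, sympF_eq_dotProduct] using hx (0, w)
  have hsnd : ∀ w, x.2 ⬝ᵥ w = 0 := fun w => by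
    simpa [sympForm_apply, sympF_eq_dotProduct] using hx (w, 0)
  exact Prod.ext (dotProduct_eq_zero _ hfst) (dotProduct_eq_zero _ hsnd)

lemma dualF_eq_orthogonal {n : ℕ} (D : Submodule (ZMod 2) (VF n)) :
    dualF (D : Set (VF n)) = (sympForm n).orthogonal D := by
  ext z
  simp only [dualF, Set.mem_ofPred_eq, SetLike.mem_coe, LinearMap.BilinForm.mem_orthogonal_iff,
    sympForm_apply, sympF_comm z]

lemma card_VF (n : ℕ) : Nat.card (VF n) = 2 ^ (2 * n) := by
  simp [two_mul, pow_add]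

lemma card_mul_card_dualF {n : ℕ} (D : Submodule (ZMod 2) (VF n)) :
    Nat.card D * Nat.card (dualF (D : Set (VF n))) = 2 ^ (2 * n) := by
  rw [dualF_eq_orthogonal, SetLike.coe_sort_coe,
    LinearMap.BilinForm.card_mul_card_orthogonal (sympForm_nondegenerate n), card_VF]

-- the `ζ`-coordinate `v` of `x = uκ + vζ`, complementing `resVec`
def zetaVec {n : ℕ} (x : VE n) : VF n := (fun i => (x.1 i).2, fun i => (x.2 i).2)

def coords (n : ℕ) : VE n ≃+ VF n × VF n where
  toFun x := (resVec x, zetaVec x)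
  invFun p := (fun i => (p.1.1 i, p.2.1 i), fun i => (p.1.2 i, p.2.2 i))
  left_inv _ := rfl
  right_inv _ := rfl
  map_add' _ _ := rfl

lemma coords_apply {n : ℕ} (x : VE n) : coords n x = (resVec x, zetaVec x) := rfl

lemma coords_evec_zeta {n : ℕ} (v : VF n) : coords n (evec zeta v) = (0, v) := by
  have h₁ : ∀ u : ZMod 2, (fsmul u zeta).1 = 0 := by decide
  have h₂ : ∀ u : ZMod 2, (fsmul u zeta).2 = u := by decide
  ext i <;> simp [coords_apply, resVec, zetaVec, evec, h₁, h₂]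

lemma resVec_evec_zeta {n : ℕ} (v : VF n) : resVec (evec zeta v) = 0 :=
  congrArg Prod.fst (coords_evec_zeta v)

lemma zetaVec_evec_zeta {n : ℕ} (v : VF n) : zetaVec (evec zeta v) = v :=
  congrArg Prod.snd (coords_evec_zeta v)

lemma evec_zeta_zetaVec {n : ℕ} {x : VE n} (hx : resVec x = 0) : evec zeta (zetaVec x) = x :=
  (coords n).injective (by rw [coords_evec_zeta, coords_apply, hx])

lemma evec_zeta_add {n : ℕ} (v w : VF n) : evec zeta (v + w) = evec zeta v + evec zeta w :=
  (coords n).injective (by simp [coords_evec_zeta])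

lemma zeta_smul {n : ℕ} (x : VE n) : zeta • x = evec zeta (resVec x) := by
  have h₁ : ∀ e : Ering, (zeta * e).1 = 0 := by decide
  have h₂ : ∀ e : Ering, (zeta * e).2 = e.1 := by decide
  refine (coords n).injective ?_
  rw [coords_evec_zeta]
  ext i <;> simp [coords_apply, resVec, zetaVec, h₁, h₂]

lemma add_kappa_smul {n : ℕ} (x : VE n) : x + kappa • x = evec zeta (zetaVec x) := by
  have h₁ : ∀ e : Ering, (e + kappa * e).1 = 0 := by decide
  have h₂ : ∀ e : Ering, (e + kappa * e).2 = e.2 := by decide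
  refine (coords n).injective ?_
  rw [coords_evec_zeta]
  ext i <;> simp [coords_apply, resVec, zetaVec, h₁, h₂]

lemma sympE_eq {n : ℕ} (x y : VE n) :
    sympE x y = (sympF (resVec x) (resVec y), sympF (zetaVec x) (resVec y)) := by
  refine Prod.ext ?_ ?_
  · exact congrArg₂ (· + ·) Prod.fst_sum Prod.fst_sum
  · exact congrArg₂ (· + ·) Prod.snd_sum Prod.snd_sum

lemma card_VE (n : ℕ) : Nat.card (VE n) = 4 ^ (2 * n) := by
  rw [Nat.card_congr (coords n).toEquiv, Nat.card_prod, card_VF, ← mul_pow]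
  norm_num

lemma card_preimage_resVec {n : ℕ} (S : Set (VF n)) :
    Nat.card (resVec ⁻¹' S) = Nat.card S * 2 ^ (2 * n) := by
  have h : resVec ⁻¹' S = coords n ⁻¹' (S ×ˢ Set.univ) := by ext; simp [coords_apply]
  rw [Nat.card_coe_set_eq, h, Set.ncard_preimage_of_injective_subset_range (coords n).injective
    (by simp [(coords n).surjective.range_eq]), Set.ncard_prod, Set.ncard_univ, card_VF,
    ← Nat.card_coe_set_eq]

lemma neg_eq_self_VE {n : ℕ} (x : VE n) : -x = x := by
  have h : ∀ e : Ering, -e = e := by decide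
  exact Prod.ext (funext fun i => h _) (funext fun i => h _)

def evecZeta (n : ℕ) : VF n →+ VE n := AddMonoidHom.mk' (evec zeta) evec_zeta_add

def resHom (n : ℕ) : VE n →+ VF n := AddMonoidHom.mk' resVec fun _ _ => rfl

namespace IsLinearCode

variable {n : ℕ} {C : Set (VE n)}

def toAddSubgroup (hC : IsLinearCode C) : AddSubgroup (VE n) where
  carrier := C
  zero_mem' := hC.1
  add_mem' ha hb := hC.2.1 _ ha _ hb
  neg_mem' := by simp [neg_eq_self_VE]

def torSubmodule (hC : IsLinearCode C) : Submodule (ZMod 2) (VF n) :=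
  AddSubgroup.toZModSubmodule 2 (hC.toAddSubgroup.comap (evecZeta n))

lemma coe_torSubmodule (hC : IsLinearCode C) : (hC.torSubmodule : Set (VF n)) = torCode C := by
  ext v
  simp [torSubmodule, toAddSubgroup, evecZeta, torCode]

lemma resVec_mem_torCode (hC : IsLinearCode C) {w : VE n} (hw : w ∈ C) :
    resVec w ∈ torCode C := by
  have h : zeta • w ∈ C := hC.2.2 zeta w hw
  rwa [zeta_smul] at h

lemma zetaVec_mem_torCode (hC : IsLinearCode C) {w : VE n} (hw : w ∈ C) :
    zetaVec w ∈ torCode C := by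
  have h : w + kappa • w ∈ C := hC.2.1 _ hw _ (hC.2.2 kappa w hw)
  rwa [add_kappa_smul] at h

lemma card_eq_card_resCode_mul_card_torCode (hC : IsLinearCode C) :
    Nat.card C = Nat.card (resCode C) * Nat.card (torCode C) := by
  set f : hC.toAddSubgroup →+ VF n := (resHom n).comp hC.toAddSubgroup.subtype
  have hrange : Nat.card f.range = Nat.card (resCode C) := by
    rw [← SetLike.coe_sort_coe, AddMonoidHom.coe_range]
    congr 2
    ext v
    constructor
    · rintro ⟨w, rfl⟩
      exact ⟨w.1, w.2, rfl⟩
    · rintro ⟨w, hw, rfl⟩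
      exact ⟨⟨w, hw⟩, rfl⟩
  have mem_ker : ∀ w, w ∈ f.ker ↔ resVec (w : VE n) = 0 := fun _ => AddMonoidHom.mem_ker
  have hker : Nat.card f.ker = Nat.card (torCode C) := Nat.card_congr
    { toFun w := ⟨zetaVec w.1.1, by
        rw [torCode, Set.mem_ofPred_eq, evec_zeta_zetaVec ((mem_ker _).1 w.2)]; exact w.1.2⟩
      invFun v := ⟨⟨evec zeta v, v.2⟩, (mem_ker _).2 (resVec_evec_zeta v.1)⟩
      left_inv w := Subtype.ext (Subtype.ext (evec_zeta_zetaVec ((mem_ker _).1 w.2)))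
      right_inv v := Subtype.ext (zetaVec_evec_zeta v.1) }
  calc Nat.card C = Nat.card f.ker * f.ker.index := f.ker.card_mul_index.symm
    _ = Nat.card (resCode C) * Nat.card (torCode C) := by
      rw [AddSubgroup.index_ker, hrange, hker, mul_comm]

lemma rightDual_eq (hC : IsLinearCode C) : rightDual C = resVec ⁻¹' dualF (torCode C) := by
  ext z
  constructor
  · intro h v hv
    rw [sympF_comm, ← zetaVec_evec_zeta v]
    exact congrArg Prod.snd ((sympE_eq _ _).symm.trans (h _ hv))
  · intro h w hw
    rw [sympE_eq, sympF_comm, sympF_comm (zetaVec w), h _ (hC.resVec_mem_torCode hw),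
      h _ (hC.zetaVec_mem_torCode hw)]
    rfl

lemma card_mul_card_rightDual (hC : IsLinearCode C) :
    Nat.card C * Nat.card (rightDual C) = Nat.card (resCode C) * 4 ^ (2 * n) := by
  have hdual := card_mul_card_dualF hC.torSubmodule
  rw [← SetLike.coe_sort_coe, coe_torSubmodule] at hdual
  calc Nat.card C * Nat.card (rightDual C)
      = Nat.card (resCode C) * (Nat.card (torCode C) * Nat.card (dualF (torCode C))) *
          2 ^ (2 * n) := by
        rw [card_eq_card_resCode_mul_card_torCode hC, rightDual_eq hC, card_preimage_resVec]
        ring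
    _ = Nat.card (resCode C) * 4 ^ (2 * n) := by
        rw [hdual, mul_assoc, ← mul_pow]
        norm_num

end IsLinearCode

lemma leftDual_eq_univ {n : ℕ} {C : Set (VE n)} (h : resCode C = {0}) : leftDual C = Set.univ :=
  Set.eq_univ_of_forall fun _ w hw => by
    have hw0 : resVec w = 0 := by rw [← Set.mem_singleton_iff, ← h]; exact ⟨w, hw, rfl⟩
    rw [sympE_eq, hw0, sympF_zero_right, sympF_zero_right]
    rfl

end Ering

/-- `C` is right symplectic nice iff `C_Res = {0}`, in which case
`C^{⊥_{S_R}} = C^{⊥_S}`; a nonzero code cannot be both left and right symplectic nice. -/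
theorem Ering.right_nice_iff {n : ℕ} (C : Set (VE n)) (hC : IsLinearCode C) :
    (Nat.card ↥C * Nat.card ↥(rightDual C) = 4 ^ (2 * n) ↔
      resCode C = ({0} : Set (VF n))) ∧
    (resCode C = ({0} : Set (VF n)) → rightDual C = dual C) ∧
    (C ≠ ({0} : Set (VE n)) →
      ¬ (Nat.card ↥C * Nat.card ↥(leftDual C) = 4 ^ (2 * n) ∧
         Nat.card ↥C * Nat.card ↥(rightDual C) = 4 ^ (2 * n))) := by
  have hpos : 4 ^ (2 * n) ≠ 0 := by positivity
  have hzero : (0 : VF n) ∈ resCode C := ⟨0, hC.1, rfl⟩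
  have hnice : Nat.card C * Nat.card (rightDual C) = 4 ^ (2 * n) ↔ resCode C = {0} := by
    rw [hC.card_mul_card_rightDual, mul_eq_right₀ hpos,
      Set.natCard_eq_one_iff_eq_singleton_of_mem hzero]
  refine ⟨hnice, fun h => by rw [dual, leftDual_eq_univ h, Set.univ_inter], ?_⟩
  rintro hne ⟨hleft, hright⟩
  rw [leftDual_eq_univ (hnice.1 hright), Nat.card_univ, card_VE, mul_eq_right₀ hpos,
    Set.natCard_eq_one_iff_eq_singleton_of_mem hC.1] at hleft
  exact hne hleft
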